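/- Let A be a distributive double algebra and N ⊂ M a right A-extension (i.e., M is a right H-module algebra with N = M^H). Then: (1) the left N-module M is balanced, i.e., BiEnd(_N M) = λ(N); (2) the bimodule _N M_{H#M} is faithfully balanced if and only if the canonical algebra map Γ_M : H # M → End(_N M) is an isomorphism. -/
import Mathlib


open scoped TensorProduct
open Finset Function

noncomputable section

/-- A (Frobenius, distributive) double algebra with antipode, over a commutative
ring `k`: one `k`-module `A` with a vertical multiplication `vmul` (`∘`, unit `e`)
and a horizontal multiplication `hmul` (`⋆`, unit `i`), the four Frobenius
dual-basis systems for the base maps `φ_B, φ_T, φ_L, φ_R`, the four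
distributivity laws, and an antipode `S`. -/
structure DDA (k A : Type) [CommRing k] [AddCommGroup A] [Module k A] : Type where
  vmul : A →ₗ[k] A →ₗ[k] A
  hmul : A →ₗ[k] A →ₗ[k] A
  e : A
  i : A
  vassoc : ∀ a b c, vmul (vmul a b) c = vmul a (vmul b c)
  e_vmul : ∀ a, vmul e a = a
  vmul_e : ∀ a, vmul a e = a
  hassoc : ∀ a b c, hmul (hmul a b) c = hmul a (hmul b c)
  i_hmul : ∀ a, hmul i a = a
  hmul_i : ∀ a, hmul a i = a
  nB : ℕ
  uB : Fin nB → A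
  vB : Fin nB → A
  nT : ℕ
  uT : Fin nT → A
  vT : Fin nT → A
  nL : ℕ
  xL : Fin nL → A
  yL : Fin nL → A
  nR : ℕ
  xR : Fin nR → A
  yR : Fin nR → A
  frobB1 : ∀ a, ∑ j, hmul (vmul (hmul a (uB j)) i) (vB j) = a
  frobB2 : ∀ a, ∑ j, hmul (hmul a (uB j)) (vmul (vB j) i) = a
  frobT1 : ∀ a, ∑ j, hmul (vmul i (hmul a (uT j))) (vT j) = a
  frobT2 : ∀ a, ∑ j, hmul (hmul a (uT j)) (vmul i (vT j)) = a
  frobL1 : ∀ a, ∑ j, vmul (hmul (vmul a (xL j)) e) (yL j) = a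
  frobL2 : ∀ a, ∑ j, vmul (vmul a (xL j)) (hmul (yL j) e) = a
  frobR1 : ∀ a, ∑ j, vmul (hmul e (vmul a (xR j))) (yR j) = a
  frobR2 : ∀ a, ∑ j, vmul (vmul a (xR j)) (hmul e (yR j)) = a
  distB : ∀ a a' a'', vmul a (hmul a' a'') = ∑ j, hmul (vmul (hmul a (uB j)) a') (vmul (vB j) a'')
  distL : ∀ a a' a'', hmul a (vmul a' a'') = ∑ j, vmul (hmul (vmul a (xL j)) a') (hmul (yL j) a'')
  distT : ∀ a a' a'', vmul (hmul a' a'') a = ∑ j, hmul (vmul a' (hmul a (uT j))) (vmul a'' (vT j))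
  distR : ∀ a a' a'', hmul (vmul a' a'') a = ∑ j, vmul (hmul a' (vmul a (xR j))) (hmul a'' (yR j))
  S : A ≃ₗ[k] A
  S_vmul : ∀ a b, S (vmul a b) = vmul (S b) (S a)
  S_hmul : ∀ a b, S (hmul a b) = hmul (S b) (S a)

namespace DDA

variable {k A : Type} [CommRing k] [AddCommGroup A] [Module k A] (D : DDA k A)

/-- `φ_B(a) = a ∘ i`. -/
def phiB (a : A) : A := D.vmul a D.i
/-- `φ_T(a) = i ∘ a`. -/
def phiT (a : A) : A := D.vmul D.i a
/-- `φ_L(a) = a ⋆ e`. -/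
def phiL (a : A) : A := D.hmul a D.e
/-- `φ_R(a) = e ⋆ a`. -/
def phiR (a : A) : A := D.hmul D.e a

def Bset : Set A := Set.range D.phiB
def Tset : Set A := Set.range D.phiT
def Lset : Set A := Set.range D.phiL
def Rset : Set A := Set.range D.phiR

end DDA

/-- A right module algebra `M` over the horizontal Hopf algebroid `H = ⟨A,⋆,i⟩`
of the double algebra `D` (equivalently, a right comodule algebra over the
vertical Hopf algebroid `V`). -/
structure RModAlg (k A M : Type) [CommRing k] [AddCommGroup A] [Module k A]
    [Ring M] [Algebra k M] (D : DDA k A) : Type where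
  act : M →ₗ[k] A →ₗ[k] M
  act_act : ∀ m a b, act (act m a) b = act m (D.hmul a b)
  act_i : ∀ m, act m D.i = m
  mul_act : ∀ m m' h, act (m * m') h = ∑ j, act m (D.vmul h (D.xR j)) * act m' (D.yR j)
  one_act : ∀ h, act 1 h = act 1 (D.phiT (D.phiR h))

namespace RModAlg

variable {k A M : Type} [CommRing k] [AddCommGroup A] [Module k A]
  [Ring M] [Algebra k M] {D : DDA k A}

/-- The invariants `M^H = { n | n ◁ h = n ◁ φ_T(φ_R(h)) }`. -/
def Inv (MA : RModAlg k A M D) : Set M :=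
  { n | ∀ h, MA.act n h = MA.act n (D.phiT (D.phiR h)) }

/-- Relators for `M ⊗_N M`, `N = M^H`. -/
def relN (MA : RModAlg k A M D) : Submodule k (M ⊗[k] M) :=
  Submodule.span k
    { z | ∃ m m' n, n ∈ MA.Inv ∧ z = (m * n) ⊗ₜ[k] m' - m ⊗ₜ[k] (n * m') }

/-- `M ⊗_N M`. -/
def MtN (MA : RModAlg k A M D) := (M ⊗[k] M) ⧸ MA.relN

instance (MA : RModAlg k A M D) : AddCommGroup MA.MtN :=
  inferInstanceAs (AddCommGroup ((M ⊗[k] M) ⧸ MA.relN))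
instance (MA : RModAlg k A M D) : Module k MA.MtN :=
  inferInstanceAs (Module k ((M ⊗[k] M) ⧸ MA.relN))

def mkN (MA : RModAlg k A M D) : (M ⊗[k] M) →ₗ[k] MA.MtN := MA.relN.mkQ

/-- Relators for `M ⊗_T V` : `(m ◁ t) ⊗ a - m ⊗ t_r(t) ∘ a` with `t = φ_T(c)`,
`t_r = φ_L|_T`. -/
def relT (MA : RModAlg k A M D) : Submodule k (M ⊗[k] A) :=
  Submodule.span k
    { z | ∃ m a c, z = MA.act m (D.phiT c) ⊗ₜ[k] a
        - m ⊗ₜ[k] D.vmul (D.phiL (D.phiT c)) a }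

/-- `M ⊗_T V`. -/
def MtT (MA : RModAlg k A M D) := (M ⊗[k] A) ⧸ MA.relT

instance (MA : RModAlg k A M D) : AddCommGroup MA.MtT :=
  inferInstanceAs (AddCommGroup ((M ⊗[k] A) ⧸ MA.relT))
instance (MA : RModAlg k A M D) : Module k MA.MtT :=
  inferInstanceAs (Module k ((M ⊗[k] A) ⧸ MA.relT))

def mkT (MA : RModAlg k A M D) : (M ⊗[k] A) →ₗ[k] MA.MtT := MA.relT.mkQ

/-- Relators for `M ⊗_B V` : `(m ◁ b) ⊗ a - m ⊗ t_l(b) ∘ a` with `b = φ_B(c)`,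
`t_l = φ_R|_B`. -/
def relB (MA : RModAlg k A M D) : Submodule k (M ⊗[k] A) :=
  Submodule.span k
    { z | ∃ m a c, z = MA.act m (D.phiB c) ⊗ₜ[k] a
        - m ⊗ₜ[k] D.vmul (D.phiR (D.phiB c)) a }

/-- `M ⊗_B V`. -/
def MtB (MA : RModAlg k A M D) := (M ⊗[k] A) ⧸ MA.relB

instance (MA : RModAlg k A M D) : AddCommGroup MA.MtB :=
  inferInstanceAs (AddCommGroup ((M ⊗[k] A) ⧸ MA.relB))
instance (MA : RModAlg k A M D) : Module k MA.MtB :=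
  inferInstanceAs (Module k ((M ⊗[k] A) ⧸ MA.relB))

def mkB (MA : RModAlg k A M D) : (M ⊗[k] A) →ₗ[k] MA.MtB := MA.relB.mkQ

/-- Relators for `M ⊗_R H` : `(m ◁ r) ⊗ h - m ⊗ t_r(r) ⋆ h`, `r = φ_R(c)`,
`t_r = φ_B|_R`. -/
def relRH (MA : RModAlg k A M D) : Submodule k (M ⊗[k] A) :=
  Submodule.span k
    { z | ∃ m h c, z = MA.act m (D.phiR c) ⊗ₜ[k] h
        - m ⊗ₜ[k] D.hmul (D.phiB (D.phiR c)) h }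

/-- `M ⊗_R H`. -/
def MtRH (MA : RModAlg k A M D) := (M ⊗[k] A) ⧸ MA.relRH

instance (MA : RModAlg k A M D) : AddCommGroup MA.MtRH :=
  inferInstanceAs (AddCommGroup ((M ⊗[k] A) ⧸ MA.relRH))
instance (MA : RModAlg k A M D) : Module k MA.MtRH :=
  inferInstanceAs (Module k ((M ⊗[k] A) ⧸ MA.relRH))

def mkRH (MA : RModAlg k A M D) : (M ⊗[k] A) →ₗ[k] MA.MtRH := MA.relRH.mkQ

/-- Relators for `H ⊗_R M` : `(h ⋆ s_r(r)) ⊗ m - h ⊗ η(r) m`, `r = φ_R(c)`,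
`s_r = φ_T|_R`, `η(r) = 1 ◁ r`. -/
def relHM (MA : RModAlg k A M D) : Submodule k (A ⊗[k] M) :=
  Submodule.span k
    { z | ∃ h m c, z = D.hmul h (D.phiT (D.phiR c)) ⊗ₜ[k] m
        - h ⊗ₜ[k] (MA.act 1 (D.phiR c) * m) }

/-- `H ⊗_R M` (underlying module of the smash product `H # M`). -/
def HtM (MA : RModAlg k A M D) := (A ⊗[k] M) ⧸ MA.relHM

instance (MA : RModAlg k A M D) : AddCommGroup MA.HtM :=
  inferInstanceAs (AddCommGroup ((A ⊗[k] M) ⧸ MA.relHM))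
instance (MA : RModAlg k A M D) : Module k MA.HtM :=
  inferInstanceAs (Module k ((A ⊗[k] M) ⧸ MA.relHM))

def mkHM (MA : RModAlg k A M D) : (A ⊗[k] M) →ₗ[k] MA.HtM := MA.relHM.mkQ

/-- Right `N`-linearity of an endomorphism of `M` (`N = M^H`). -/
def IsRightNLinear (MA : RModAlg k A M D) (f : M →ₗ[k] M) : Prop :=
  ∀ m n, n ∈ MA.Inv → f (m * n) = f m * n

/-- Left `N`-linearity of an endomorphism of `M`. -/
def IsLeftNLinear (MA : RModAlg k A M D) (f : M →ₗ[k] M) : Prop :=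
  ∀ n m, n ∈ MA.Inv → f (n * m) = n * f m

/-- `M_N` is finitely generated projective (dual-basis characterization). -/
def FgpRightN (MA : RModAlg k A M D) : Prop :=
  ∃ (n : ℕ) (x : Fin n → M) (f : Fin n → (M →ₗ[k] M)),
    (∀ j, MA.IsRightNLinear (f j)) ∧ (∀ j m, f j m ∈ MA.Inv) ∧
      ∀ m, m = ∑ j, x j * f j m

/-- `_N M` is finitely generated projective (dual-basis characterization). -/
def FgpLeftN (MA : RModAlg k A M D) : Prop :=
  ∃ (n : ℕ) (x : Fin n → M) (f : Fin n → (M →ₗ[k] M)),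
    (∀ j, MA.IsLeftNLinear (f j)) ∧ (∀ j m, f j m ∈ MA.Inv) ∧
      ∀ m, m = ∑ j, f j m * x j

/-- Defining property of the Galois map
`γ^M : M ⊗_N M → M ⊗_T V`, `m ⊗ m' ↦ m m'^(0) ⊗ m'^(1)`
(using `δ^M(m') = Σ (m' ◁ u^k) ⊗ v^k`). -/
def IsGammaT (MA : RModAlg k A M D) (γ : MA.MtN →ₗ[k] MA.MtT) : Prop :=
  ∀ m m', γ (MA.mkN (m ⊗ₜ[k] m'))
    = ∑ j, MA.mkT ((m * MA.act m' (D.uT j)) ⊗ₜ[k] D.vT j)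

/-- Defining property of the Galois map
`γ_M : M ⊗_N M → M ⊗_B V`, `m ⊗ m' ↦ m_(0) m' ⊗ m_(1)`
(using `δ_M(m) = Σ (m ◁ u_k) ⊗ v_k`). -/
def IsGammaB (MA : RModAlg k A M D) (γ : MA.MtN →ₗ[k] MA.MtB) : Prop :=
  ∀ m m', γ (MA.mkN (m ⊗ₜ[k] m'))
    = ∑ j, MA.mkB ((MA.act m (D.uB j) * m') ⊗ₜ[k] D.vB j)

/-- Defining property of `Γ^M : M ⊗_R H → End(M_N)`, `(m ⊗ h) ↦ (m' ↦ m (m' ◁ h))`. -/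
def IsGammaUpM (MA : RModAlg k A M D) (Γ : MA.MtRH →ₗ[k] M →ₗ[k] M) : Prop :=
  ∀ m h m', Γ (MA.mkRH (m ⊗ₜ[k] h)) m' = m * MA.act m' h

/-- Defining property of `Γ_M : H ⊗_R M → End(_N M)`, `(h ⊗ m) ↦ (m' ↦ (m' ◁ h) m)`. -/
def IsGammaLowM (MA : RModAlg k A M D) (Γ : MA.HtM →ₗ[k] M →ₗ[k] M) : Prop :=
  ∀ h m m', Γ (MA.mkHM (h ⊗ₜ[k] m)) m' = MA.act m' h * m

/-- `Γ` is an isomorphism onto `End(M_N)`. -/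
def IsIsoOntoEndRight (MA : RModAlg k A M D) {W : Type} [AddCommGroup W] [Module k W]
    (Γ : W →ₗ[k] M →ₗ[k] M) : Prop :=
  Function.Injective Γ ∧ (∀ z, MA.IsRightNLinear (Γ z)) ∧
    ∀ f : M →ₗ[k] M, MA.IsRightNLinear f → ∃ z, Γ z = f

/-- `Γ` is an isomorphism onto `End(_N M)`. -/
def IsIsoOntoEndLeft (MA : RModAlg k A M D) {W : Type} [AddCommGroup W] [Module k W]
    (Γ : W →ₗ[k] M →ₗ[k] M) : Prop :=
  Function.Injective Γ ∧ (∀ z, MA.IsLeftNLinear (Γ z)) ∧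
    ∀ f : M →ₗ[k] M, MA.IsLeftNLinear f → ∃ z, Γ z = f

end RModAlg

section Stmt8

variable {k A M : Type} [CommRing k] [AddCommGroup A] [Module k A]
  [Ring M] [Algebra k M] (D : DDA k A) (MA : RModAlg k A M D)

/-- `f` commutes with every left `N`-linear endomorphism of `M`, i.e.
`f ∈ BiEnd(_N M) = End_{End(_N M)}(M)`. -/
def InBiEndLeft (f : M →ₗ[k] M) : Prop :=
  ∀ g : M →ₗ[k] M, MA.IsLeftNLinear g → ∀ m, f (g m) = g (f m)

/-- `f` is `H # M`-linear for the right `H # M`-action `m' · (h # m) = (m' ◁ h) m`. -/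
def IsSmashLinear (f : M →ₗ[k] M) : Prop :=
  ∀ m' h m, f (MA.act m' h * m) = MA.act (f m') h * m

/-- `_N M_{H#M}` is faithfully balanced: `λ : N → End(M_{H#M})` is bijective and
`H # M → End(_N M)` (i.e. `Γ_M`) is bijective onto `End(_N M)`. -/
def FaithfullyBalanced (ΓM : MA.HtM →ₗ[k] M →ₗ[k] M) : Prop :=
  ((∀ n, n ∈ MA.Inv → IsSmashLinear D MA (LinearMap.mulLeft k n)) ∧
    ∀ f : M →ₗ[k] M, IsSmashLinear D MA f →
      ∃! n, n ∈ MA.Inv ∧ f = LinearMap.mulLeft k n) ∧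
  MA.IsIsoOntoEndLeft ΓM


theorem lemP (ΓM : MA.HtM →ₗ[k] M →ₗ[k] M) (hΓM : MA.IsGammaLowM ΓM) (m : M) (c : A) :
    MA.act m (D.phiT (D.phiR c)) = m * MA.act 1 (D.phiR c) := by
  have hrel : (D.hmul D.i (D.phiT (D.phiR c))) ⊗ₜ[k] (1 : M)
      - D.i ⊗ₜ[k] (MA.act 1 (D.phiR c) * 1) ∈ MA.relHM :=
    Submodule.subset_span ⟨D.i, 1, c, rfl⟩
  have h0 : MA.mkHM ((D.hmul D.i (D.phiT (D.phiR c))) ⊗ₜ[k] (1 : M))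
      = MA.mkHM (D.i ⊗ₜ[k] (MA.act 1 (D.phiR c) * 1)) := by
    have hz : MA.mkHM ((D.hmul D.i (D.phiT (D.phiR c))) ⊗ₜ[k] (1 : M)
        - D.i ⊗ₜ[k] (MA.act 1 (D.phiR c) * 1)) = 0 := by
      rw [RModAlg.mkHM]
      exact (Submodule.Quotient.mk_eq_zero _).2 hrel
    rw [map_sub, sub_eq_zero] at hz
    exact hz
  have h1 := hΓM (D.hmul D.i (D.phiT (D.phiR c))) 1 m
  have h2 := hΓM D.i (MA.act 1 (D.phiR c) * 1) m
  rw [h0, h2] at h1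
  rw [D.i_hmul, mul_one] at h1
  rw [MA.act_i, mul_one] at h1
  exact h1.symm

theorem act_one_phiR (ΓM : MA.HtM →ₗ[k] M →ₗ[k] M) (hΓM : MA.IsGammaLowM ΓM) (w : A) :
    MA.act 1 w = MA.act 1 (D.phiR w) := by
  rw [MA.one_act w, lemP D MA ΓM hΓM 1 w, one_mul]

theorem lemK'' (ΓM : MA.HtM →ₗ[k] M →ₗ[k] M) (hΓM : MA.IsGammaLowM ΓM)
    {n : M} (hn : n ∈ MA.Inv) (w : A) :
    MA.act n w = n * MA.act 1 w := by
  rw [hn w, lemP D MA ΓM hΓM n w, ← act_one_phiR D MA ΓM hΓM w]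

theorem lemK (ΓM : MA.HtM →ₗ[k] M →ₗ[k] M) (hΓM : MA.IsGammaLowM ΓM)
    {n : M} (hn : n ∈ MA.Inv) (m : M) (h : A) :
    MA.act (n * m) h = n * MA.act m h := by
  have h2 := MA.mul_act 1 m h
  rw [one_mul] at h2
  rw [MA.mul_act n m h]
  calc ∑ j, MA.act n (D.vmul h (D.xR j)) * MA.act m (D.yR j)
      = ∑ j, n * (MA.act 1 (D.vmul h (D.xR j)) * MA.act m (D.yR j)) := by
        refine Finset.sum_congr rfl fun j _ => ?_
        rw [lemK'' D MA ΓM hΓM hn, mul_assoc]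
    _ = n * ∑ j, MA.act 1 (D.vmul h (D.xR j)) * MA.act m (D.yR j) :=
        (Finset.mul_sum _ _ _).symm
    _ = n * MA.act m h := by rw [← h2]

/-- For a right `A`-extension `N = M^H ⊆ M` over a
distributive double algebra:
(1) `_N M` is balanced, i.e. `BiEnd(_N M) = λ(N)`;
(2) `_N M_{H#M}` is faithfully balanced iff the canonical map
`Γ_M : H # M → End(_N M)` is an isomorphism. -/
theorem stmt8 (ΓM : MA.HtM →ₗ[k] M →ₗ[k] M) (hΓM : MA.IsGammaLowM ΓM) :
    ((∀ f : M →ₗ[k] M, InBiEndLeft D MA f →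
        ∃ n, n ∈ MA.Inv ∧ f = LinearMap.mulLeft k n) ∧
      (∀ n, n ∈ MA.Inv → InBiEndLeft D MA (LinearMap.mulLeft k n))) ∧
    (FaithfullyBalanced D MA ΓM ↔ MA.IsIsoOntoEndLeft ΓM) := by
  constructor
  · constructor
    · -- BiEnd(_N M) = λ(N)
      intro f hf
      refine ⟨f 1, ?_, ?_⟩
      · -- f 1 ∈ Inv
        intro h
        have hlin : ∀ a : A, MA.IsLeftNLinear (MA.act.flip a) := by
          intro a n m hn
          simp only [LinearMap.flip_apply]
          exact lemK D MA ΓM hΓM hn m a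
        have e1 := hf (MA.act.flip h) (hlin h) 1
        have e2 := hf (MA.act.flip (D.phiT (D.phiR h))) (hlin _) 1
        simp only [LinearMap.flip_apply] at e1 e2
        rw [← e1, ← e2, MA.one_act h]
      · -- f = mulLeft (f 1)
        refine LinearMap.ext fun m => ?_
        have hg : MA.IsLeftNLinear (LinearMap.mulRight k m) := by
          intro n x hn
          simp only [LinearMap.mulRight_apply]
          rw [mul_assoc]
        have := hf (LinearMap.mulRight k m) hg 1
        simp only [LinearMap.mulRight_apply, one_mul] at this
        simpa [LinearMap.mulLeft_apply] using this
    · -- λ(N) ⊆ BiEnd(_N M)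
      intro n hn g hg m
      simp only [LinearMap.mulLeft_apply]
      exact (hg n m hn).symm
  · constructor
    · intro hFB
      exact hFB.2
    · intro hIso
      refine ⟨⟨?_, ?_⟩, hIso⟩
      · -- λ(n) is smash linear for n ∈ Inv
        intro n hn m' h m
        simp only [LinearMap.mulLeft_apply]
        rw [lemK D MA ΓM hΓM hn m' h, mul_assoc]
      · -- every smash linear map is a unique λ(n)
        intro f hf
        have hfm : ∀ m, f m = f 1 * m := by
          intro m
          have := hf 1 D.i m
          rwa [MA.act_i, MA.act_i, one_mul] at this
        refine ⟨f 1, ⟨?_, ?_⟩, ?_⟩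
        · -- f 1 ∈ Inv
          intro h
          have e1 := hf 1 h 1
          have e2 := hf 1 (D.phiT (D.phiR h)) 1
          rw [mul_one, mul_one] at e1 e2
          rw [← e1, ← e2, MA.one_act h]
        · refine LinearMap.ext fun m => ?_
          simpa [LinearMap.mulLeft_apply] using hfm m
        · rintro n' ⟨hn', hEq⟩
          have := congrArg (fun g : M →ₗ[k] M => g 1) hEq
          simpa [LinearMap.mulLeft_apply] using this.symm


end Stmt8
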